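/- arXiv:2011.03450 — 7 statements merged into one kernel-verified Lean document; each statement's English description precedes it below -/
import Mathlib

section
/- Let a ∈ (0,∞) and let φ : [0,a] → [0,∞) be a nondecreasing, concave function vanishing only at the origin (φ(t) = 0 if and only if t = 0). Assume that lim_{t→0+} t/φ(t) = 0 and lim_{t→0+} φ(t) = 0. Then there exists a nondecreasing, concave function ψ : [0,a] → [0,∞) such that ψ ≤ φ on [0,a], ψ vanishes only at the origin, liminf_{t→0+} ψ(t)/φ(t) = 0, and limsup_{t→0+} ψ(t)/φ(t) = 1. -/
/-!
The minorant `ψ` is the polygonal interpolant of `φ` at nodes `a = u₀ > u₁ > ⋯ → 0`, written as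
the infimum of the secant lines of `φ` over the intervals `[u (n+1), u n]`. Concavity of `φ` puts
each secant line above `φ` outside its interval and below `φ` inside it, so `ψ ≤ φ`, `ψ = φ` at
every node (whence `limsup ψ/φ = 1`), and `ψ` is concave and nondecreasing as an infimum of
nondecreasing affine functions.

The nodes are chosen recursively. Given `u n`, since `t/φ(t) → 0` pick `s n ≤ u n / 2` with
`s n / φ (s n) ≤ u n / (2 (n+1) φ (u n))`; since `φ(t) → 0` then pick `u (n+1) < s n` with
`φ (u (n+1)) ≤ φ (s n) / (n+1)`. On `[u (n+1), u n]` the slope of `ψ` is at most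
`2 φ (u n) / u n`, hence `ψ (s n) ≤ 2 φ (s n) / (n+1)` and `liminf ψ/φ = 0`.
-/

open Filter Set Topology

section SecantLine

variable {𝕜 : Type*} [Field 𝕜] {f : 𝕜 → 𝕜} {s : Set 𝕜} {p q t : 𝕜}

def secantLine (f : 𝕜 → 𝕜) (p q t : 𝕜) : 𝕜 := f p + slope f p q * (t - p)

@[simp] lemma secantLine_left : secantLine f p q p = f p := by simp [secantLine]

lemma secantLine_right (hpq : p ≠ q) : secantLine f p q q = f q := by
  rw [secantLine, slope_def_field, div_mul_cancel₀ _ (sub_ne_zero.2 hpq.symm)]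
  ring

lemma eq_add_slope_mul (f : 𝕜 → 𝕜) (htp : t ≠ p) : f t = f p + slope f p t * (t - p) := by
  rw [slope_def_field, div_mul_cancel₀ _ (sub_ne_zero.2 htp)]
  ring

variable [LinearOrder 𝕜] [IsStrictOrderedRing 𝕜]

lemma secantLine_mono (h : 0 ≤ slope f p q) : Monotone (secantLine f p q) := fun _ _ hxy => by
  unfold secantLine
  gcongr

lemma concaveOn_secantLine : ConcaveOn 𝕜 univ (secantLine f p q) :=
  ⟨convex_univ, fun x _ y _ α β _ _ hαβ => le_of_eq <| by
    simp only [secantLine, smul_eq_mul]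
    linear_combination (f p - slope f p q * p) * hαβ⟩

lemma ConcaveOn.le_secantLine (hf : ConcaveOn 𝕜 s f) (hp : p ∈ s) (hq : q ∈ s) (hpq : p < q)
    (ht : t ∈ s) (htpq : t ≤ p ∨ q ≤ t) : f t ≤ secantLine f p q t := by
  rcases eq_or_ne t p with rfl | htp
  · simp
  rw [eq_add_slope_mul f htp, secantLine]
  have hq' : q ∈ s \ {p} := ⟨hq, hpq.ne'⟩
  rcases htpq with htp' | hqt
  · have := hf.slope_anti hp ⟨ht, htp⟩ hq' (htp'.trans hpq.le)
    nlinarith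
  · have := hf.slope_anti hp hq' ⟨ht, htp⟩ hqt
    nlinarith

lemma ConcaveOn.secantLine_le (hf : ConcaveOn 𝕜 s f) (hp : p ∈ s) (hq : q ∈ s) (ht : t ∈ Icc p q) :
    secantLine f p q t ≤ f t := by
  rcases eq_or_ne t p with rfl | htp
  · simp
  have hpt : p < t := lt_of_le_of_ne ht.1 htp.symm
  rw [eq_add_slope_mul f htp, secantLine]
  have := hf.slope_anti hp ⟨hf.1.ordConnected.out hp hq ht, htp⟩ ⟨hq, (hpt.trans_le ht.2).ne'⟩ ht.2
  nlinarith

end SecantLine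

lemma concaveOn_ciInf {E ι : Type*} [AddCommMonoid E] [Module ℝ E] [Nonempty ι] {s : Set E}
    {g : ι → E → ℝ} (hg : ∀ i, ConcaveOn ℝ s (g i))
    (hbdd : ∀ x ∈ s, BddBelow (range fun i => g i x)) : ConcaveOn ℝ s fun x => ⨅ i, g i x :=
  ⟨(hg (Classical.arbitrary ι)).1, fun x hx y hy _ _ hα hβ hαβ => le_ciInf fun i =>
    (add_le_add (smul_le_smul_of_nonneg_left (ciInf_le (hbdd x hx) i) hα)
      (smul_le_smul_of_nonneg_left (ciInf_le (hbdd y hy) i) hβ)).trans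
      ((hg i).2 hx hy hα hβ hαβ)⟩

lemma liminf_eq_of_tendsto_comp {α : Type*} {l : Filter α} {f : α → ℝ} {c : ℝ} {x : ℕ → α}
    (hx : Tendsto x atTop l) (hfx : Tendsto (f ∘ x) atTop (𝓝 c)) (hge : ∀ᶠ y in l, c ≤ f y)
    (hbdd : IsBoundedUnder (· ≤ ·) l f) : liminf f l = c := by
  have : NeBot l := hx.neBot
  refine le_antisymm ?_ (le_liminf_of_le hbdd.isCoboundedUnder_ge hge)
  calc liminf f l ≤ liminf (f ∘ x) atTop :=
        hx.liminf_le_liminf_comp (hbdd.mono hx).isCoboundedUnder_ge ⟨c, hge⟩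
    _ = c := hfx.liminf_eq

lemma limsup_eq_of_tendsto_comp {α : Type*} {l : Filter α} {f : α → ℝ} {c : ℝ} {x : ℕ → α}
    (hx : Tendsto x atTop l) (hfx : Tendsto (f ∘ x) atTop (𝓝 c)) (hle : ∀ᶠ y in l, f y ≤ c)
    (hbdd : IsBoundedUnder (· ≥ ·) l f) : limsup f l = c := by
  have : NeBot l := hx.neBot
  refine le_antisymm (limsup_le_of_le hbdd.isCoboundedUnder_le hle) ?_
  calc c = limsup (f ∘ x) atTop := hfx.limsup_eq.symm
    _ ≤ limsup f l := hx.limsup_comp_le_limsup (hbdd.mono hx).isCoboundedUnder_le ⟨c, hle⟩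

lemma tendsto_zero_of_succ_le_half {u : ℕ → ℝ} (h0 : ∀ n, 0 ≤ u n)
    (h : ∀ n, u (n + 1) ≤ u n / 2) : Tendsto u atTop (𝓝 0) := by
  have hgeom : Tendsto (fun n => (1 / 2 : ℝ) ^ n * u 0) atTop (𝓝 0) := by
    simpa using (tendsto_pow_atTop_nhds_zero_of_lt_one (r := (1 / 2 : ℝ)) (by norm_num)
      (by norm_num)).mul_const (u 0)
  exact squeeze_zero h0 (fun n => le_geom (by norm_num) n fun k _ => by linarith [h k]) hgeom

lemma exists_mem_Icc_succ {α : Type*} [LinearOrder α] {v : ℕ → α} {x : α} (h0 : x ≤ v 0)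
    {N : ℕ} (hN : v N < x) : ∃ n, x ∈ Icc (v (n + 1)) (v n) := by
  induction N with
  | zero => exact absurd h0 hN.not_ge
  | succ N ih =>
    rcases le_or_gt x (v N) with h | h
    · exact ⟨N, hN.le, h⟩
    · exact ih h

lemma secantLine_nonneg {a p q t : ℝ} {φ : ℝ → ℝ} (hmono : MonotoneOn φ (Icc 0 a))
    (hconc : ConcaveOn ℝ (Icc 0 a) φ) (hφ0 : 0 ≤ φ 0) (hp : 0 ≤ p) (hpq : p < q) (hqa : q ≤ a)
    (ht : 0 ≤ t) : 0 ≤ secantLine φ p q t := by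
  have hpa : p ∈ Icc 0 a := ⟨hp, hpq.le.trans hqa⟩
  have hqa : q ∈ Icc 0 a := ⟨hp.trans hpq.le, hqa⟩
  calc 0 ≤ φ 0 := hφ0
    _ ≤ secantLine φ p q 0 :=
      hconc.le_secantLine hpa hqa hpq ⟨le_rfl, hpa.1.trans hpa.2⟩ (Or.inl hp)
    _ ≤ secantLine φ p q t := secantLine_mono (hmono.slope_nonneg hpa hqa) ht

noncomputable def secantInf (φ : ℝ → ℝ) (u : ℕ → ℝ) (t : ℝ) : ℝ :=
  ⨅ n, secantLine φ (u (n + 1)) (u n) t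

structure IsConcaveNodeSeq (a : ℝ) (φ : ℝ → ℝ) (u : ℕ → ℝ) : Prop where
  monotoneOn : MonotoneOn φ (Icc 0 a)
  concaveOn : ConcaveOn ℝ (Icc 0 a) φ
  nonneg_zero : 0 ≤ φ 0
  strictAnti : StrictAnti u
  mem : ∀ n, u n ∈ Ioc 0 a
  zero : u 0 = a
  tendsto : Tendsto u atTop (𝓝 0)

namespace IsConcaveNodeSeq

variable {a t : ℝ} {φ : ℝ → ℝ} {u : ℕ → ℝ}

lemma mem_Icc (h : IsConcaveNodeSeq a φ u) (n : ℕ) : u n ∈ Icc 0 a :=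
  Ioc_subset_Icc_self (h.mem n)

lemma secantLine_nonneg (h : IsConcaveNodeSeq a φ u) (n : ℕ) (ht : 0 ≤ t) :
    0 ≤ secantLine φ (u (n + 1)) (u n) t :=
  _root_.secantLine_nonneg h.monotoneOn h.concaveOn h.nonneg_zero (h.mem (n + 1)).1.le
    (h.strictAnti n.lt_succ_self) (h.mem n).2 ht

lemma bddBelow_secantLine (h : IsConcaveNodeSeq a φ u) (ht : 0 ≤ t) :
    BddBelow (range fun n => secantLine φ (u (n + 1)) (u n) t) :=
  ⟨0, forall_mem_range.2 fun n => h.secantLine_nonneg n ht⟩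

lemma secantInf_le_secantLine (h : IsConcaveNodeSeq a φ u) (ht : 0 ≤ t) (n : ℕ) :
    secantInf φ u t ≤ secantLine φ (u (n + 1)) (u n) t :=
  ciInf_le (h.bddBelow_secantLine ht) n

lemma secantInf_nonneg (h : IsConcaveNodeSeq a φ u) (ht : 0 ≤ t) : 0 ≤ secantInf φ u t :=
  le_ciInf fun n => h.secantLine_nonneg n ht

lemma secantInf_node (h : IsConcaveNodeSeq a φ u) (n : ℕ) : secantInf φ u (u n) = φ (u n) := by
  refine le_antisymm ?_ (le_ciInf fun m => ?_)
  · exact (h.secantInf_le_secantLine (h.mem n).1.le n).trans_eq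
      (secantLine_right (h.strictAnti n.lt_succ_self).ne)
  · refine h.concaveOn.le_secantLine (h.mem_Icc _) (h.mem_Icc m) (h.strictAnti m.lt_succ_self)
      (h.mem_Icc n) ?_
    rcases le_or_gt n m with hnm | hmn
    · exact Or.inr (h.strictAnti.antitone hnm)
    · exact Or.inl (h.strictAnti.antitone hmn)

lemma monotoneOn_secantInf (h : IsConcaveNodeSeq a φ u) : MonotoneOn (secantInf φ u) (Ici 0) :=
  fun _ hx _ _ hxy => le_ciInf fun n => (h.secantInf_le_secantLine hx n).trans
    (secantLine_mono (h.monotoneOn.slope_nonneg (h.mem_Icc _) (h.mem_Icc n)) hxy)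

lemma concaveOn_secantInf (h : IsConcaveNodeSeq a φ u) : ConcaveOn ℝ (Ici 0) (secantInf φ u) :=
  concaveOn_ciInf (fun _ => concaveOn_secantLine.subset (subset_univ _) (convex_Ici 0))
    fun _ => h.bddBelow_secantLine

lemma tendsto_nhdsWithin (h : IsConcaveNodeSeq a φ u) : Tendsto u atTop (𝓝[Ioc 0 a] 0) :=
  tendsto_nhdsWithin_iff.2 ⟨h.tendsto, .of_forall h.mem⟩

lemma secantInf_le_self (h : IsConcaveNodeSeq a φ u) (ht : t ∈ Ioc 0 a) :
    secantInf φ u t ≤ φ t := by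
  obtain ⟨N, hN⟩ := (h.tendsto.eventually (gt_mem_nhds ht.1)).exists
  obtain ⟨n, hn⟩ := exists_mem_Icc_succ (h.zero ▸ ht.2) hN
  exact (h.secantInf_le_secantLine ht.1.le n).trans
    (h.concaveOn.secantLine_le (h.mem_Icc _) (h.mem_Icc n) hn)

lemma secantInf_pos (h : IsConcaveNodeSeq a φ u) (hφpos : ∀ t ∈ Ioc 0 a, 0 < φ t)
    (ht : 0 < t) : 0 < secantInf φ u t := by
  obtain ⟨n, hn⟩ := (h.tendsto.eventually (gt_mem_nhds ht)).exists
  calc 0 < φ (u n) := hφpos _ (h.mem n)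
    _ = secantInf φ u (u n) := (h.secantInf_node n).symm
    _ ≤ secantInf φ u t := h.monotoneOn_secantInf (h.mem n).1.le ht.le hn.le

lemma secantInf_zero (h : IsConcaveNodeSeq a φ u)
    (hφu : Tendsto (fun n => φ (u n)) atTop (𝓝 0)) : secantInf φ u 0 = 0 := by
  refine le_antisymm (ge_of_tendsto' hφu fun n => ?_) (h.secantInf_nonneg le_rfl)
  rw [← h.secantInf_node n]
  exact h.monotoneOn_secantInf self_mem_Ici (h.mem n).1.le (h.mem n).1.le

lemma secantInf_div_mem_Icc (h : IsConcaveNodeSeq a φ u) (hφpos : ∀ t ∈ Ioc 0 a, 0 < φ t)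
    (ht : t ∈ Ioc 0 a) : secantInf φ u t / φ t ∈ Icc 0 1 :=
  ⟨div_nonneg (h.secantInf_nonneg ht.1.le) (hφpos t ht).le,
    (div_le_one (hφpos t ht)).2 (h.secantInf_le_self ht)⟩

lemma tendsto_secantInf_div {s : ℕ → ℝ} (h : IsConcaveNodeSeq a φ u) (hs : ∀ n, 0 < s n)
    (hφs : ∀ n, 0 < φ (s n))
    (hslope : ∀ n : ℕ, slope φ (u (n + 1)) (u n) * s n ≤ φ (s n) / (n + 1))
    (hφu : ∀ n : ℕ, φ (u (n + 1)) ≤ φ (s n) / (n + 1)) :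
    Tendsto (fun n => secantInf φ u (s n) / φ (s n)) atTop (𝓝 0) := by
  have hbound : ∀ n : ℕ, secantInf φ u (s n) / φ (s n) ≤ 2 * (1 / ((n : ℝ) + 1)) := by
    intro n
    have hψ := h.secantInf_le_secantLine (hs n).le n
    have hm : 0 ≤ slope φ (u (n + 1)) (u n) * u (n + 1) :=
      mul_nonneg (h.monotoneOn.slope_nonneg (h.mem_Icc _) (h.mem_Icc n)) (h.mem _).1.le
    rw [div_le_iff₀ (hφs n)]
    calc secantInf φ u (s n) ≤ φ (u (n + 1)) + slope φ (u (n + 1)) (u n) * s n := by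
          unfold secantLine at hψ
          linarith
      _ ≤ φ (s n) / (n + 1) + φ (s n) / (n + 1) := add_le_add (hφu n) (hslope n)
      _ = 2 * (1 / ((n : ℝ) + 1)) * φ (s n) := by ring
  refine squeeze_zero (fun n => div_nonneg (h.secantInf_nonneg (hs n).le) (hφs n).le) hbound ?_
  simpa using tendsto_one_div_add_atTop_nhds_zero_nat.const_mul (2 : ℝ)

end IsConcaveNodeSeq

section Nodes

variable {a : ℝ} {φ : ℝ → ℝ}

lemma exists_node_step (hφpos : ∀ t ∈ Ioc 0 a, 0 < φ t)
    (hlim1 : Tendsto (fun t => t / φ t) (𝓝[Ioc 0 a] 0) (𝓝 0))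
    (hlim2 : Tendsto φ (𝓝[Ioc 0 a] 0) (𝓝 0)) {t c : ℝ} (ht : t ∈ Ioc 0 a) (hc : 0 < c) :
    ∃ σ τ, τ ∈ Ioc 0 a ∧ τ < σ ∧ σ ≤ t / 2 ∧ slope φ τ t * σ ≤ φ σ / c ∧ φ τ ≤ φ σ / c := by
  have : (𝓝[Ioc 0 a] (0 : ℝ)).NeBot := left_nhdsWithin_Ioc_neBot (ht.1.trans_le ht.2)
  have hφt := hφpos t ht
  obtain ⟨σ, hσ_ratio, hσt, hσ⟩ := ((hlim1.eventually
    (gt_mem_nhds (div_pos ht.1 (by positivity) : 0 < t / (2 * c * φ t)))).and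
    ((eventually_nhdsWithin_of_eventually_nhds (gt_mem_nhds (half_pos ht.1))).and
    self_mem_nhdsWithin)).exists
  have hφσ := hφpos σ hσ
  obtain ⟨τ, hτφ, hτσ, hτ⟩ := ((hlim2.eventually
    (gt_mem_nhds (div_pos hφσ hc))).and
    ((eventually_nhdsWithin_of_eventually_nhds (gt_mem_nhds hσ.1)).and
    self_mem_nhdsWithin)).exists
  refine ⟨σ, τ, hτ, hτσ, hσt.le, ?_, hτφ.le⟩
  have hslope : slope φ τ t ≤ 2 * φ t / t := by
    rw [slope_def_field, div_le_div_iff₀ (by linarith) ht.1]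
    nlinarith [hφpos τ hτ]
  rw [div_lt_div_iff₀ hφσ (by positivity)] at hσ_ratio
  calc slope φ τ t * σ ≤ 2 * φ t / t * σ := by gcongr; exact hσ.1.le
    _ ≤ φ σ / c := by
      rw [div_mul_eq_mul_div, div_le_div_iff₀ ht.1 hc]
      linarith

lemma exists_node_seq (ha : 0 < a) (hφpos : ∀ t ∈ Ioc 0 a, 0 < φ t)
    (hlim1 : Tendsto (fun t => t / φ t) (𝓝[Ioc 0 a] 0) (𝓝 0))
    (hlim2 : Tendsto φ (𝓝[Ioc 0 a] 0) (𝓝 0)) :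
    ∃ u s : ℕ → ℝ, u 0 = a ∧ (∀ n, u n ∈ Ioc 0 a) ∧ ∀ n : ℕ, u (n + 1) < s n ∧ s n ≤ u n / 2 ∧
      slope φ (u (n + 1)) (u n) * s n ≤ φ (s n) / (n + 1) ∧ φ (u (n + 1)) ≤ φ (s n) / (n + 1) := by
  have step : ∀ (n : ℕ) (t : ℝ), ∃ σ τ : ℝ, t ∈ Ioc 0 a → τ ∈ Ioc 0 a ∧ τ < σ ∧ σ ≤ t / 2 ∧
      slope φ τ t * σ ≤ φ σ / (n + 1) ∧ φ τ ≤ φ σ / (n + 1) := by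
    intro n t
    by_cases ht : t ∈ Ioc 0 a
    · obtain ⟨σ, τ, hστ⟩ := exists_node_step hφpos hlim1 hlim2 ht n.cast_add_one_pos
      exact ⟨σ, τ, fun _ => hστ⟩
    · exact ⟨0, 0, fun h => absurd h ht⟩
  choose σ τ hστ using step
  let u : ℕ → ℝ := fun n => Nat.rec a (fun k x => τ k x) n
  have hu_mem : ∀ n, u n ∈ Ioc 0 a := by
    intro n
    induction n with
    | zero => exact ⟨ha, le_rfl⟩
    | succ n ih => exact (hστ n (u n) ih).1
  exact ⟨u, fun n => σ n (u n), rfl, hu_mem, fun n => (hστ n (u n) (hu_mem n)).2⟩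

lemma exists_isConcaveNodeSeq (ha : 0 < a) (hmono : MonotoneOn φ (Icc 0 a))
    (hconc : ConcaveOn ℝ (Icc 0 a) φ) (hφ0 : 0 ≤ φ 0) (hφpos : ∀ t ∈ Ioc 0 a, 0 < φ t)
    (hlim1 : Tendsto (fun t => t / φ t) (𝓝[Ioc 0 a] 0) (𝓝 0))
    (hlim2 : Tendsto φ (𝓝[Ioc 0 a] 0) (𝓝 0)) :
    ∃ u s : ℕ → ℝ, IsConcaveNodeSeq a φ u ∧ (∀ n, s n ∈ Ioc 0 a) ∧
      Tendsto s atTop (𝓝[Ioc 0 a] 0) ∧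
      (∀ n : ℕ, slope φ (u (n + 1)) (u n) * s n ≤ φ (s n) / (n + 1)) ∧
      ∀ n : ℕ, φ (u (n + 1)) ≤ φ (s n) / (n + 1) := by
  obtain ⟨u, s, hu0, hu_mem, hs⟩ := exists_node_seq ha hφpos hlim1 hlim2
  have hs_le : ∀ n, s n ≤ u n := fun n => (hs n).2.1.trans (half_le_self (hu_mem n).1.le)
  have hs_mem : ∀ n, s n ∈ Ioc 0 a :=
    fun n => ⟨(hu_mem (n + 1)).1.trans (hs n).1, (hs_le n).trans (hu_mem n).2⟩
  have hu_lim : Tendsto u atTop (𝓝 0) :=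
    tendsto_zero_of_succ_le_half (fun n => (hu_mem n).1.le) fun n => (hs n).1.le.trans (hs n).2.1
  have hs_lim : Tendsto s atTop (𝓝 0) := squeeze_zero (fun n => (hs_mem n).1.le) hs_le hu_lim
  refine ⟨u, s, ⟨hmono, hconc, hφ0,
    strictAnti_nat_of_succ_lt fun n => (hs n).1.trans_le (hs_le n), hu_mem, hu0, hu_lim⟩,
    hs_mem, tendsto_nhdsWithin_iff.2 ⟨hs_lim, .of_forall hs_mem⟩, fun n => (hs n).2.2.1,
    fun n => (hs n).2.2.2⟩

end Nodes

theorem stmt_0_general (a : ℝ) (ha : 0 < a) (φ : ℝ → ℝ)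
    (hmono : MonotoneOn φ (Icc 0 a))
    (hconc : ConcaveOn ℝ (Icc 0 a) φ)
    (hvanish : ∀ t ∈ Icc 0 a, φ t = 0 ↔ t = 0)
    (hlim1 : Tendsto (fun t => t / φ t) (nhdsWithin 0 (Ioc 0 a)) (nhds 0))
    (hlim2 : Tendsto φ (nhdsWithin 0 (Ioc 0 a)) (nhds 0)) :
    ∃ ψ : ℝ → ℝ,
      MonotoneOn ψ (Icc 0 a) ∧
      ConcaveOn ℝ (Icc 0 a) ψ ∧
      (∀ t ∈ Icc 0 a, 0 ≤ ψ t ∧ ψ t ≤ φ t) ∧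
      (∀ t ∈ Icc 0 a, ψ t = 0 ↔ t = 0) ∧
      liminf (fun t => ψ t / φ t) (nhdsWithin 0 (Ioc 0 a)) = 0 ∧
      limsup (fun t => ψ t / φ t) (nhdsWithin 0 (Ioc 0 a)) = 1 := by
  have hφ0 : φ 0 = 0 := (hvanish 0 ⟨le_rfl, ha.le⟩).2 rfl
  have hφpos : ∀ t ∈ Ioc 0 a, 0 < φ t := fun t ht =>
    (hφ0 ▸ hmono ⟨le_rfl, ha.le⟩ (Ioc_subset_Icc_self ht) ht.1.le).lt_of_ne'
      fun h => ht.1.ne' ((hvanish t (Ioc_subset_Icc_self ht)).1 h)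
  obtain ⟨u, s, hu, hs_mem, hs_lim, hslope, hφu⟩ :=
    exists_isConcaveNodeSeq ha hmono hconc hφ0.ge hφpos hlim1 hlim2
  have hψ0 : secantInf φ u 0 = 0 := hu.secantInf_zero (hlim2.comp hu.tendsto_nhdsWithin)
  have hratio : ∀ᶠ t in 𝓝[Ioc 0 a] 0, secantInf φ u t / φ t ∈ Icc 0 1 :=
    eventually_mem_nhdsWithin.mono fun t ht => hu.secantInf_div_mem_Icc hφpos ht
  refine ⟨secantInf φ u, hu.monotoneOn_secantInf.mono Icc_subset_Ici_self,
    hu.concaveOn_secantInf.subset Icc_subset_Ici_self (convex_Icc 0 a), fun t ht => ?_,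
    fun t ht => ⟨fun hψt => ?_, fun ht0 => ht0 ▸ hψ0⟩, ?_, ?_⟩
  · refine ⟨hu.secantInf_nonneg ht.1, ?_⟩
    rcases ht.1.eq_or_lt with rfl | ht0
    · rw [hψ0, hφ0]
    · exact hu.secantInf_le_self ⟨ht0, ht.2⟩
  · by_contra ht0
    exact (hu.secantInf_pos hφpos (ht.1.lt_of_ne' ht0)).ne' hψt
  · exact liminf_eq_of_tendsto_comp hs_lim
      (hu.tendsto_secantInf_div (fun n => (hs_mem n).1) (fun n => hφpos _ (hs_mem n)) hslope hφu)
      (hratio.mono fun _ h => h.1) (isBoundedUnder_of_eventually_le (hratio.mono fun _ h => h.2))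
  · refine limsup_eq_of_tendsto_comp hu.tendsto_nhdsWithin (tendsto_const_nhds.congr fun n => ?_)
      (hratio.mono fun _ h => h.2) (isBoundedUnder_of_eventually_ge (hratio.mono fun _ h => h.1))
    rw [Function.comp_apply, hu.secantInf_node n, div_self (hφpos _ (hu.mem n)).ne']

/-- Given a nondecreasing, concave `φ : [0,a] → [0,∞)` vanishing only at the
origin, with `t/φ(t) → 0` and `φ(t) → 0` as `t → 0+`, there exists a nondecreasing concave
`ψ ≤ φ` vanishing only at the origin with `liminf ψ/φ = 0` and `limsup ψ/φ = 1` at `0+`. -/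
theorem stmt_0 (a : ℝ) (ha : 0 < a) (φ : ℝ → ℝ)
    (hmono : MonotoneOn φ (Icc 0 a))
    (hconc : ConcaveOn ℝ (Icc 0 a) φ)
    (hnonneg : ∀ t ∈ Icc 0 a, 0 ≤ φ t)
    (hvanish : ∀ t ∈ Icc 0 a, φ t = 0 ↔ t = 0)
    (hlim1 : Tendsto (fun t => t / φ t) (nhdsWithin 0 (Ioc 0 a)) (nhds 0))
    (hlim2 : Tendsto φ (nhdsWithin 0 (Ioc 0 a)) (nhds 0)) :
    ∃ ψ : ℝ → ℝ,
      MonotoneOn ψ (Icc 0 a) ∧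
      ConcaveOn ℝ (Icc 0 a) ψ ∧
      (∀ t ∈ Icc 0 a, 0 ≤ ψ t ∧ ψ t ≤ φ t) ∧
      (∀ t ∈ Icc 0 a, ψ t = 0 ↔ t = 0) ∧
      liminf (fun t => ψ t / φ t) (nhdsWithin 0 (Ioc 0 a)) = 0 ∧
      limsup (fun t => ψ t / φ t) (nhdsWithin 0 (Ioc 0 a)) = 1 :=
  stmt_0_general a ha φ hmono hconc hvanish hlim1 hlim2
end

section
/- Let a ∈ (0,∞) and let φ : [0,a] → [0,∞) be a nondecreasing, concave function vanishing only at the origin, with lim_{t→0+} t/φ(t) = 0 and lim_{t→0+} φ(t) = 0. Then there exist sequences (t_k)_{k≥1} and (τ_k)_{k≥1} of positive real numbers, both converging to 0, such that t_1 = a and, for every k ∈ ℕ: t_{k+1} < τ_k < t_k/2 < t_k, (φ(τ_k) − φ(t_{k+1}))/(τ_k − t_{k+1}) > 2^{k+1} · (φ(t_k) − φ(t_{k+1}))/(t_k − t_{k+1}), and φ(t_{k+1}) ≤ 2^{−k−1} φ(τ_k). -/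
open Filter Set Topology

/-! Since `φ(t)/t → ∞` as `t → 0+`, below any `u` there is a `τ < u/2` whose chord slope
`φ(τ)/τ` from the origin exceeds `2^{k+1} φ(u)/u`. Since `φ(s) → 0`, the secant slopes
through a point `s` tend to these chord slopes as `s → 0+`, so a small enough `s` keeps the
strict inequality between the secant slopes and also makes `φ(s)` as small as required.
Iterating this step from `t_1 = a` gives the sequences; the `t_k` at least halve at each step,
so both sequences tend to `0`. -/

theorem exists_seq_of_forall_exists {α : Type*} {S : Set α} {R : ℕ → α → α → Prop}
    {x₀ : α} (h₀ : x₀ ∈ S) (step : ∀ n, ∀ x ∈ S, ∃ y ∈ S, R n x y) :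
    ∃ t : ℕ → α, t 0 = x₀ ∧ ∀ n, t n ∈ S ∧ R n (t n) (t (n + 1)) := by
  choose! f hfS hfR using step
  let t : ℕ → α := fun n => Nat.rec x₀ f n
  have htS : ∀ n, t n ∈ S := fun n => Nat.rec h₀ (fun n ih => hfS n _ ih) n
  exact ⟨t, rfl, fun n => ⟨htS n, hfR n _ (htS n)⟩⟩

theorem tendsto_zero_of_le_half {t : ℕ → ℝ} (h0 : ∀ n, 0 ≤ t n)
    (h : ∀ n, t (n + 1) ≤ t n / 2) : Tendsto t atTop (𝓝 0) := by
  have hgeom : ∀ n, t n ≤ (1 / 2) ^ n * t 0 := fun n =>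
    le_geom (by norm_num) n fun k _ => by linarith [h k]
  have hlim : Tendsto (fun n : ℕ => (1 / 2 : ℝ) ^ n * t 0) atTop (𝓝 0) := by
    simpa using (tendsto_pow_atTop_nhds_zero_of_lt_one (by norm_num : (0 : ℝ) ≤ 1 / 2)
      (by norm_num)).mul_const (t 0)
  exact tendsto_of_tendsto_of_tendsto_of_le_of_le tendsto_const_nhds hlim h0 hgeom

section SecantSlopes

variable {φ : ℝ → ℝ}

theorem tendsto_div_self_atTop_of_tendsto_self_div (hpos : ∀ᶠ s in 𝓝[>] 0, 0 < φ s)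
    (h : Tendsto (fun s => s / φ s) (𝓝[>] 0) (𝓝 0)) :
    Tendsto (fun s => φ s / s) (𝓝[>] 0) atTop := by
  have h' : Tendsto (fun s => s / φ s) (𝓝[>] 0) (𝓝[>] 0) :=
    tendsto_nhdsWithin_iff.2 ⟨h, by
      filter_upwards [hpos, self_mem_nhdsWithin] with s hφs hs using div_pos hs hφs⟩
  exact h'.inv_tendsto_nhdsGT_zero.congr fun s => inv_div s (φ s)

theorem tendsto_secant_slope (h : Tendsto φ (𝓝[>] 0) (𝓝 0)) {x : ℝ} (hx : x ≠ 0) :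
    Tendsto (fun s => (φ x - φ s) / (x - s)) (𝓝[>] 0) (𝓝 (φ x / x)) := by
  have hid : Tendsto (fun s : ℝ => s) (𝓝[>] 0) (𝓝 0) :=
    tendsto_nhdsWithin_of_tendsto_nhds tendsto_id
  have hlim := (tendsto_const_nhds (x := φ x)).sub h |>.div
    ((tendsto_const_nhds (x := x)).sub hid) (by rwa [sub_zero])
  rwa [sub_zero, sub_zero] at hlim

theorem exists_secant_step {a : ℝ} (ha : 0 < a) (hpos : ∀ s ∈ Ioc 0 a, 0 < φ s)
    (h₁ : Tendsto (fun s => s / φ s) (𝓝[>] 0) (𝓝 0))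
    (h₂ : Tendsto φ (𝓝[>] 0) (𝓝 0)) {c : ℝ} (hc : 0 < c) {u : ℝ} (hu : u ∈ Ioc 0 a) :
    ∃ u' ∈ Ioc 0 a, ∃ τ, u' < τ ∧ τ < u / 2 ∧
      c * ((φ u - φ u') / (u - u')) < (φ τ - φ u') / (τ - u') ∧ φ u' ≤ φ τ / c := by
  have hIoc : ∀ᶠ s in 𝓝[>] 0, s ∈ Ioc 0 a := Ioc_mem_nhdsGT ha
  have hlt {r : ℝ} (hr : 0 < r) : ∀ᶠ s in 𝓝[>] (0 : ℝ), s < r :=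
    eventually_nhdsWithin_of_eventually_nhds (eventually_lt_nhds hr)
  have hsteep : ∀ᶠ s in 𝓝[>] 0, c * (φ u / u) < φ s / s :=
    (tendsto_div_self_atTop_of_tendsto_self_div (hIoc.mono hpos) h₁).eventually_gt_atTop _
  obtain ⟨τ, hτslope, hτu, hτ⟩ := (hsteep.and ((hlt (half_pos hu.1)).and hIoc)).exists
  have hsecant : ∀ᶠ s in 𝓝[>] 0, c * ((φ u - φ s) / (u - s)) < (φ τ - φ s) / (τ - s) :=
    (tendsto_const_nhds.mul (tendsto_secant_slope h₂ hu.1.ne')).eventually_lt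
      (tendsto_secant_slope h₂ hτ.1.ne') hτslope
  have hsmall : ∀ᶠ s in 𝓝[>] 0, φ s < φ τ / c :=
    h₂.eventually_lt_const (div_pos (hpos τ hτ) hc)
  obtain ⟨u', hslope, hφu', hu'τ, hu'⟩ :=
    (hsecant.and (hsmall.and ((hlt hτ.1).and hIoc))).exists
  exact ⟨u', hu', τ, hu'τ, hτu, hslope, hφu'.le⟩

end SecantSlopes

theorem stmt_1_general (a : ℝ) (ha : 0 < a) (φ : ℝ → ℝ)
    (hnonneg : ∀ t ∈ Icc 0 a, 0 ≤ φ t)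
    (hvanish : ∀ t ∈ Icc 0 a, φ t = 0 ↔ t = 0)
    (hlim1 : Tendsto (fun t => t / φ t) (nhdsWithin 0 (Ioc 0 a)) (nhds 0))
    (hlim2 : Tendsto φ (nhdsWithin 0 (Ioc 0 a)) (nhds 0)) :
    ∃ t τ : ℕ → ℝ,
      (∀ k, 1 ≤ k → 0 < t k) ∧
      (∀ k, 1 ≤ k → 0 < τ k) ∧
      Tendsto t atTop (nhds 0) ∧
      Tendsto τ atTop (nhds 0) ∧
      t 1 = a ∧
      (∀ k, 1 ≤ k →
        t (k + 1) < τ k ∧ τ k < t k / 2 ∧ t k / 2 < t k ∧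
        (φ (τ k) - φ (t (k + 1))) / (τ k - t (k + 1)) >
          2 ^ (k + 1) * ((φ (t k) - φ (t (k + 1))) / (t k - t (k + 1))) ∧
        φ (t (k + 1)) ≤ φ (τ k) / 2 ^ (k + 1)) := by
  have hpos : ∀ s ∈ Ioc 0 a, 0 < φ s := fun s hs =>
    (hnonneg s (Ioc_subset_Icc_self hs)).lt_of_ne'
      fun h => hs.1.ne' ((hvanish s (Ioc_subset_Icc_self hs)).1 h)
  rw [nhdsWithin_Ioc_eq_nhdsGT ha] at hlim1 hlim2
  obtain ⟨s, hs₀, hs⟩ := exists_seq_of_forall_exists (S := Ioc 0 a) ⟨ha, le_rfl⟩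
    fun n _ hu => exists_secant_step ha hpos hlim1 hlim2 (pow_pos two_pos (n + 2)) hu
  choose hmem τ hτ using hs
  have hs_tendsto : Tendsto s atTop (𝓝 0) :=
    tendsto_zero_of_le_half (fun n => (hmem n).1.le)
      fun n => ((hτ n).1.trans (hτ n).2.1).le
  have hτ_tendsto : Tendsto τ atTop (𝓝 0) :=
    tendsto_of_tendsto_of_tendsto_of_le_of_le tendsto_const_nhds hs_tendsto
      (fun n => ((hmem (n + 1)).1.trans (hτ n).1).le)
      fun n => by linarith [(hτ n).2.1, (hmem n).1]
  refine ⟨fun k => s (k - 1), fun k => τ (k - 1), fun k _ => (hmem _).1,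
    fun k _ => (hmem _).1.trans (hτ _).1, hs_tendsto.comp (tendsto_sub_atTop_nat 1),
    hτ_tendsto.comp (tendsto_sub_atTop_nat 1), hs₀, ?_⟩
  rintro (_ | n) hk
  · omega
  obtain ⟨hlt, hhalf, hslope, hsmall⟩ := hτ n
  exact ⟨hlt, hhalf, half_lt_self (hmem n).1, hslope, hsmall⟩

/-- Under the same assumptions on `φ`, there exist positive sequences
`(t_k)_{k≥1}`, `(τ_k)_{k≥1}` converging to `0`, with `t_1 = a`, such that for every `k ≥ 1`:
`t_{k+1} < τ_k < t_k/2 < t_k`, the slope condition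
`(φ(τ_k) − φ(t_{k+1}))/(τ_k − t_{k+1}) > 2^{k+1} (φ(t_k) − φ(t_{k+1}))/(t_k − t_{k+1})`,
and `φ(t_{k+1}) ≤ 2^{−k−1} φ(τ_k)`. -/
theorem stmt_1 (a : ℝ) (ha : 0 < a) (φ : ℝ → ℝ)
    (hmono : MonotoneOn φ (Icc 0 a))
    (hconc : ConcaveOn ℝ (Icc 0 a) φ)
    (hnonneg : ∀ t ∈ Icc 0 a, 0 ≤ φ t)
    (hvanish : ∀ t ∈ Icc 0 a, φ t = 0 ↔ t = 0)
    (hlim1 : Tendsto (fun t => t / φ t) (nhdsWithin 0 (Ioc 0 a)) (nhds 0))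
    (hlim2 : Tendsto φ (nhdsWithin 0 (Ioc 0 a)) (nhds 0)) :
    ∃ t τ : ℕ → ℝ,
      (∀ k, 1 ≤ k → 0 < t k) ∧
      (∀ k, 1 ≤ k → 0 < τ k) ∧
      Tendsto t atTop (nhds 0) ∧
      Tendsto τ atTop (nhds 0) ∧
      t 1 = a ∧
      (∀ k, 1 ≤ k →
        t (k + 1) < τ k ∧ τ k < t k / 2 ∧ t k / 2 < t k ∧
        (φ (τ k) - φ (t (k + 1))) / (τ k - t (k + 1)) >
          2 ^ (k + 1) * ((φ (t k) - φ (t (k + 1))) / (t k - t (k + 1))) ∧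
        φ (t (k + 1)) ≤ φ (τ k) / 2 ^ (k + 1)) :=
  stmt_1_general a ha φ hnonneg hvanish hlim1 hlim2
end

section
/- Let a ∈ (0,∞) and let φ : [0,a] → [0,∞) be a nondecreasing, concave function vanishing only at the origin, with lim_{t→0+} t/φ(t) = 0 and lim_{t→0+} φ(t) = 0. Then for every t ∈ (0,a] and every k ∈ ℕ there exist τ ∈ (0, t/2) and t' ∈ (0, τ) such that φ(τ)/τ > 2^{k+1} · φ(t)/t, (φ(τ) − φ(t'))/(τ − t') > 2^{k+1} · φ(t)/t, and φ(t') ≤ 2^{−k−1} φ(τ). -/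
open Filter Set

/-- Under the same assumptions on `φ`, for every `t ∈ (0,a]` and `k ∈ ℕ` there
exist `τ ∈ (0, t/2)` and `t' ∈ (0, τ)` with `φ(τ)/τ > 2^{k+1} φ(t)/t`,
`(φ(τ) − φ(t'))/(τ − t') > 2^{k+1} φ(t)/t`, and `φ(t') ≤ 2^{−k−1} φ(τ)`. -/
theorem stmt_2 (a : ℝ) (ha : 0 < a) (φ : ℝ → ℝ)
    (hmono : MonotoneOn φ (Icc 0 a))
    (hconc : ConcaveOn ℝ (Icc 0 a) φ)
    (hnonneg : ∀ t ∈ Icc 0 a, 0 ≤ φ t)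
    (hvanish : ∀ t ∈ Icc 0 a, φ t = 0 ↔ t = 0)
    (hlim1 : Tendsto (fun t => t / φ t) (nhdsWithin 0 (Ioc 0 a)) (nhds 0))
    (hlim2 : Tendsto φ (nhdsWithin 0 (Ioc 0 a)) (nhds 0)) :
    ∀ t ∈ Ioc (0 : ℝ) a, ∀ k : ℕ,
      ∃ τ ∈ Ioo (0 : ℝ) (t / 2), ∃ t' ∈ Ioo (0 : ℝ) τ,
        φ τ / τ > 2 ^ (k + 1) * (φ t / t) ∧
        (φ τ - φ t') / (τ - t') > 2 ^ (k + 1) * (φ t / t) ∧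
        φ t' ≤ φ τ / 2 ^ (k + 1) := by
  intro t ht k
  have htpos : 0 < t := ht.1
  haveI : (nhdsWithin (0:ℝ) (Ioc 0 a)).NeBot := left_nhdsWithin_Ioc_neBot ha
  have hpos : ∀ s ∈ Ioc (0:ℝ) a, 0 < φ s := by
    intro s hs
    rcases (hnonneg s ⟨hs.1.le, hs.2⟩).lt_or_eq with h | h
    · exact h
    · exact absurd ((hvanish s ⟨hs.1.le, hs.2⟩).mp h.symm) hs.1.ne'
  have hφt : 0 < φ t := hpos t ht
  set M : ℝ := 2 ^ (k + 1) * (φ t / t) with hMdef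
  have hMpos : 0 < M := by positivity
  -- choose τ
  have h1 : ∀ᶠ τ in nhdsWithin (0:ℝ) (Ioc 0 a), τ / φ τ < 1 / (2 * M) :=
    hlim1.eventually (eventually_lt_nhds (by positivity))
  have h2 : ∀ᶠ τ in nhdsWithin (0:ℝ) (Ioc 0 a), τ < t / 2 :=
    eventually_nhdsWithin_of_eventually_nhds (eventually_lt_nhds (half_pos htpos))
  have h3 : ∀ᶠ τ in nhdsWithin (0:ℝ) (Ioc 0 a), τ ∈ Ioc (0:ℝ) a :=
    eventually_mem_nhdsWithin
  obtain ⟨τ, hτ1, hτ2, hτpos, hτle⟩ := (h1.and (h2.and h3)).exists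
  have hφτ : 0 < φ τ := hpos τ ⟨hτpos, hτle⟩
  have hA : 2 * M * τ < φ τ := by
    rw [div_lt_div_iff₀ hφτ (by positivity)] at hτ1
    nlinarith
  -- choose t'
  have g1 : ∀ᶠ s in nhdsWithin (0:ℝ) (Ioc 0 a), φ s < φ τ / 2 ^ (k + 1) :=
    hlim2.eventually (eventually_lt_nhds (by positivity))
  have g2 : ∀ᶠ s in nhdsWithin (0:ℝ) (Ioc 0 a), s < τ :=
    eventually_nhdsWithin_of_eventually_nhds (eventually_lt_nhds hτpos)
  have g3 : ∀ᶠ s in nhdsWithin (0:ℝ) (Ioc 0 a), s ∈ Ioc (0:ℝ) a :=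
    eventually_mem_nhdsWithin
  obtain ⟨t', ht'1, ht'2, ht'pos, ht'le⟩ := (g1.and (g2.and g3)).exists
  have hhalf : φ τ / 2 ^ (k + 1) ≤ φ τ / 2 := by
    apply div_le_div_of_nonneg_left hφτ.le two_pos
    calc (2:ℝ) = 2 ^ 1 := (pow_one 2).symm
    _ ≤ 2 ^ (k + 1) := pow_le_pow_right₀ one_le_two (Nat.le_add_left 1 k)
  have hsmall : φ t' < φ τ / 2 := lt_of_lt_of_le ht'1 hhalf
  refine ⟨τ, ⟨hτpos, hτ2⟩, t', ⟨ht'pos, ht'2⟩, ?_, ?_, ht'1.le⟩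
  · rw [gt_iff_lt, lt_div_iff₀ hτpos]
    nlinarith
  · rw [gt_iff_lt, lt_div_iff₀ (by linarith : (0:ℝ) < τ - t')]
    nlinarith
end

section
/- Let a ∈ (0,∞], let ξ : (0,a) → (0,∞) be measurable with 0 < ∫_0^t ξ(s) ds < ∞ for every t ∈ (0,a), and let h : (0,a) → [0,∞) be nonincreasing with s ↦ h(s)ξ(s) integrable on (0,t) for every t ∈ (0,a). Then the function t ↦ (∫_0^t h(s)ξ(s) ds)/(∫_0^t ξ(s) ds) is nonincreasing on (0,a). -/
open MeasureTheory Filter Set ENNReal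

/-
For `x ≤ y`, split `∫_0^y` at `x`. On `(0, x)` the weight `h` is at least `h x`, on `(x, y)` at
most `h x`, so the `ξ`-average of `h` over `(x, y)` is at most `h x`, which is at most the average
over `(0, x)`; appending a piece with a smaller average can only lower the average.
-/

lemma setIntegral_Ioo_eq_add {f : ℝ → ℝ} {a b c : ℝ} (hab : a ≤ b) (hbc : b ≤ c)
    (hf : IntegrableOn f (Ioo a c)) :
    ∫ s in Ioo a c, f s = (∫ s in Ioo a b, f s) + ∫ s in Ioo b c, f s := by
  have hab' : IntegrableOn f (Ioc a b) := by
    rw [integrableOn_Ioc_iff_integrableOn_Ioo]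
    exact hf.mono_set (Ioo_subset_Ioo le_rfl hbc)
  have hbc' : IntegrableOn f (Ioc b c) := by
    rw [integrableOn_Ioc_iff_integrableOn_Ioo]
    exact hf.mono_set (Ioo_subset_Ioo hab le_rfl)
  rw [← integral_Ioc_eq_integral_Ioo, ← integral_Ioc_eq_integral_Ioo,
    ← integral_Ioc_eq_integral_Ioo, ← Ioc_union_Ioc_eq_Ioc hab hbc,
    setIntegral_union (Ioc_disjoint_Ioc_of_le le_rfl) measurableSet_Ioc hab' hbc']

section WeightBounds

variable {α : Type*} [MeasurableSpace α] {μ : Measure α} {s : Set α} {f w : α → ℝ} {c : ℝ}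

lemma setIntegral_mul_le_const_mul (hs : MeasurableSet s)
    (hfw : IntegrableOn (fun x => f x * w x) s μ) (hw : IntegrableOn w s μ)
    (hw_nonneg : ∀ x ∈ s, 0 ≤ w x) (hf : ∀ x ∈ s, f x ≤ c) :
    ∫ x in s, f x * w x ∂μ ≤ c * ∫ x in s, w x ∂μ := by
  rw [← integral_const_mul]
  exact setIntegral_mono_on hfw (hw.const_mul c) hs fun x hx =>
    mul_le_mul_of_nonneg_right (hf x hx) (hw_nonneg x hx)

lemma const_mul_le_setIntegral_mul (hs : MeasurableSet s)
    (hfw : IntegrableOn (fun x => f x * w x) s μ) (hw : IntegrableOn w s μ)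
    (hw_nonneg : ∀ x ∈ s, 0 ≤ w x) (hf : ∀ x ∈ s, c ≤ f x) :
    c * ∫ x in s, w x ∂μ ≤ ∫ x in s, f x * w x ∂μ := by
  rw [← integral_const_mul]
  exact setIntegral_mono_on (hw.const_mul c) hfw hs fun x hx =>
    mul_le_mul_of_nonneg_right (hf x hx) (hw_nonneg x hx)

end WeightBounds

lemma add_div_add_le_div {A B P Q c : ℝ} (hA : 0 < A) (hB : 0 ≤ B)
    (hP : c * A ≤ P) (hQ : Q ≤ c * B) : (P + Q) / (A + B) ≤ P / A := by
  rw [div_le_div_iff₀ (by linarith) hA]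
  nlinarith [mul_le_mul_of_nonneg_left hQ hA.le, mul_le_mul_of_nonneg_right hP hB]

lemma weightedAverage_Ioo_le {ξ h : ℝ → ℝ} {l x y : ℝ} (hlx : l < x) (hxy : x ≤ y)
    (hξ_nonneg : ∀ s ∈ Ioo l y, 0 ≤ ξ s) (hh : AntitoneOn h (Ioc l y))
    (hξ : IntegrableOn ξ (Ioo l y)) (hhξ : IntegrableOn (fun s => h s * ξ s) (Ioo l y))
    (hξx_pos : 0 < ∫ s in Ioo l x, ξ s) :
    (∫ s in Ioo l y, h s * ξ s) / (∫ s in Ioo l y, ξ s) ≤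
      (∫ s in Ioo l x, h s * ξ s) / ∫ s in Ioo l x, ξ s := by
  have hx_mem : x ∈ Ioc l y := ⟨hlx, hxy⟩
  have hleft : Ioo l x ⊆ Ioo l y := Ioo_subset_Ioo le_rfl hxy
  have hright : Ioo x y ⊆ Ioo l y := Ioo_subset_Ioo hlx.le le_rfl
  rw [setIntegral_Ioo_eq_add hlx.le hxy hξ, setIntegral_Ioo_eq_add hlx.le hxy hhξ]
  refine add_div_add_le_div (c := h x) hξx_pos
    (setIntegral_nonneg measurableSet_Ioo fun s hs => hξ_nonneg s (hright hs))
    (const_mul_le_setIntegral_mul measurableSet_Ioo (hhξ.mono_set hleft) (hξ.mono_set hleft)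
      (fun s hs => hξ_nonneg s (hleft hs)) fun s hs => ?_)
    (setIntegral_mul_le_const_mul measurableSet_Ioo (hhξ.mono_set hright) (hξ.mono_set hright)
      (fun s hs => hξ_nonneg s (hright hs)) fun s hs => ?_)
  · exact hh (Ioo_subset_Ioc_self (hleft hs)) hx_mem hs.2.le
  · exact hh hx_mem (Ioo_subset_Ioc_self (hright hs)) hs.1.le

theorem stmt_5_general (a : ℝ≥0∞) (ξ h : ℝ → ℝ)
    (hξpos : ∀ s : ℝ, 0 < s → ENNReal.ofReal s < a → 0 < ξ s)
    (hξint : ∀ t : ℝ, 0 < t → ENNReal.ofReal t < a →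
      IntegrableOn ξ (Ioo 0 t) ∧ 0 < ∫ s in Ioo (0 : ℝ) t, ξ s)
    (hh_anti : ∀ s u : ℝ, 0 < s → s ≤ u → ENNReal.ofReal u < a → h u ≤ h s)
    (hhξint : ∀ t : ℝ, 0 < t → ENNReal.ofReal t < a →
      IntegrableOn (fun s => h s * ξ s) (Ioo 0 t)) :
    AntitoneOn
      (fun t => (∫ s in Ioo (0 : ℝ) t, h s * ξ s) / ∫ s in Ioo (0 : ℝ) t, ξ s)
      {t : ℝ | 0 < t ∧ ENNReal.ofReal t < a} := by
  rintro x ⟨hx0, hxa⟩ y ⟨hy0, hya⟩ hxy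
  have below_a : ∀ s ≤ y, ENNReal.ofReal s < a :=
    fun s hs => (ENNReal.ofReal_le_ofReal hs).trans_lt hya
  exact weightedAverage_Ioo_le hx0 hxy
    (fun s hs => (hξpos s hs.1 (below_a s hs.2.le)).le)
    (fun s hs u hu hsu => hh_anti s u hs.1 hsu (below_a u hu.2))
    (hξint y hy0 hya).1 (hhξint y hy0 hya) (hξint x hx0 hxa).2

/-- For `a ∈ (0,∞]`, a measurable `ξ : (0,a) → (0,∞)` with
`0 < ∫_0^t ξ < ∞` for every `t ∈ (0,a)`, and a nonincreasing `h : (0,a) → [0,∞)` with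
`h·ξ` integrable on `(0,t)` for every `t ∈ (0,a)`, the function
`t ↦ (∫_0^t h ξ)/(∫_0^t ξ)` is nonincreasing on `(0,a)`. -/
theorem stmt_5 (a : ℝ≥0∞) (ha : 0 < a) (ξ h : ℝ → ℝ)
    (hξmeas : Measurable ξ)
    (hξpos : ∀ s : ℝ, 0 < s → ENNReal.ofReal s < a → 0 < ξ s)
    (hξint : ∀ t : ℝ, 0 < t → ENNReal.ofReal t < a →
      IntegrableOn ξ (Ioo 0 t) ∧ 0 < ∫ s in Ioo (0 : ℝ) t, ξ s)
    (hh_nonneg : ∀ s : ℝ, 0 < s → ENNReal.ofReal s < a → 0 ≤ h s)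
    (hh_anti : ∀ s u : ℝ, 0 < s → s ≤ u → ENNReal.ofReal u < a → h u ≤ h s)
    (hhξint : ∀ t : ℝ, 0 < t → ENNReal.ofReal t < a →
      IntegrableOn (fun s => h s * ξ s) (Ioo 0 t)) :
    AntitoneOn
      (fun t => (∫ s in Ioo (0 : ℝ) t, h s * ξ s) / ∫ s in Ioo (0 : ℝ) t, ξ s)
      {t : ℝ | 0 < t ∧ ENNReal.ofReal t < a} :=
  stmt_5_general a ξ h hξpos hξint hh_anti hhξint
end

section
/- Let a > 0, α ∈ (0,1) and β ∈ ℝ. Then there exist constants c, C > 0 such that for every t ∈ (0,a]: c · t^{1−α} ℓ_a(t)^{−β} ≤ ∫_0^t s^{−α} ℓ_a(s)^{−β} ds ≤ C · t^{1−α} ℓ_a(t)^{−β}. -/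
/-!
Write `ℓ s = log (e a / s)`, so that `ℓ s = ℓ t + log (t / s)` and `ℓ ≥ 1` on `(0, a]`.
On `(t/2, t)` the weight `ℓ s` is comparable to `ℓ t` and `s^{-α} ≥ t^{-α}`, which gives the
lower bound. For the upper bound, `ℓ s / ℓ t ≤ 1 + log (t / s)`, and a power of a logarithm is
dominated by any small power: `(1 + log (t/s))^{|β|} ≤ K (t/s)^ε`. Choosing `α + ε < 1`, the
integrand is then at most a constant multiple of `t^ε ℓ(t)^{-β} s^{-α-ε}`, which is integrable
near `0` with integral of order `t^{1-α} ℓ(t)^{-β}`.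
-/

open MeasureTheory Set Real

lemma one_add_rpow_le_mul_exp {b ε u : ℝ} (hb : 0 ≤ b) (hε : 0 < ε) (hu : 0 ≤ u) :
    (1 + u) ^ b ≤ (1 + b / ε) ^ b * exp (ε * u) := by
  rcases hb.eq_or_lt with rfl | hb
  · simpa using one_le_exp (by positivity : 0 ≤ ε * u)
  have key : 1 + u ≤ (1 + b / ε) * exp (ε / b * u) := calc
    1 + u ≤ 1 + u + ε / b * u + b / ε := by
      have : 0 ≤ ε / b * u := by positivity
      have : 0 ≤ b / ε := by positivity
      linarith
    _ = (1 + b / ε) * (ε / b * u + 1) := by field_simp; ring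
    _ ≤ (1 + b / ε) * exp (ε / b * u) := by gcongr; exact add_one_le_exp _
  calc (1 + u) ^ b ≤ ((1 + b / ε) * exp (ε / b * u)) ^ b := by gcongr
    _ = (1 + b / ε) ^ b * exp (ε * u) := by
      rw [mul_rpow (by positivity) (exp_pos _).le, ← exp_mul]
      field_simp

lemma rpow_le_rpow_mul_div_rpow_abs {x y : ℝ} (γ : ℝ) (hy : 0 < y) (hyx : y ≤ x) :
    x ^ γ ≤ y ^ γ * (x / y) ^ |γ| := by
  rw [← mul_div_cancel₀ x hy.ne', mul_rpow hy.le (div_pos (hy.trans_le hyx) hy).le,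
    mul_div_cancel_left₀ _ hy.ne']
  gcongr
  · exact (one_le_div hy).2 hyx
  · exact le_abs_self γ

lemma rpow_mul_div_rpow_neg_abs_le {x y : ℝ} (γ : ℝ) (hy : 0 < y) (hyx : y ≤ x) :
    y ^ γ * (x / y) ^ (-|γ|) ≤ x ^ γ := by
  conv_rhs => rw [← mul_div_cancel₀ x hy.ne', mul_rpow hy.le (div_pos (hy.trans_le hyx) hy).le]
  gcongr
  · exact (one_le_div hy).2 hyx
  · exact neg_abs_le γ

lemma setIntegral_Ioo_rpow {t γ : ℝ} (ht : 0 ≤ t) (hγ : -1 < γ) :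
    ∫ s in Ioo 0 t, s ^ γ = t ^ (γ + 1) / (γ + 1) := by
  rw [← integral_Ioc_eq_integral_Ioo, ← intervalIntegral.integral_of_le ht,
    integral_rpow (.inl hγ), zero_rpow (by linarith), sub_zero]

section DominatedByPower

variable {f : ℝ → ℝ} {t M γ : ℝ}

lemma integrableOn_Ioo_of_le_mul_rpow (ht : 0 < t) (hγ : -1 < γ)
    (hf : AEStronglyMeasurable f (volume.restrict (Ioo 0 t)))
    (hf0 : ∀ s ∈ Ioo 0 t, 0 ≤ f s) (hle : ∀ s ∈ Ioo 0 t, f s ≤ M * s ^ γ) :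
    IntegrableOn f (Ioo 0 t) := by
  refine (((intervalIntegral.integrableOn_Ioo_rpow_iff ht).2 hγ).const_mul M).mono' hf ?_
  filter_upwards [self_mem_ae_restrict measurableSet_Ioo] with s hs
  rw [norm_of_nonneg (hf0 s hs)]
  exact hle s hs

lemma setIntegral_Ioo_le_of_le_mul_rpow (ht : 0 < t) (hγ : -1 < γ)
    (hf : AEStronglyMeasurable f (volume.restrict (Ioo 0 t)))
    (hf0 : ∀ s ∈ Ioo 0 t, 0 ≤ f s) (hle : ∀ s ∈ Ioo 0 t, f s ≤ M * s ^ γ) :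
    ∫ s in Ioo 0 t, f s ≤ M * (t ^ (γ + 1) / (γ + 1)) := by
  rw [← setIntegral_Ioo_rpow ht.le hγ, ← integral_const_mul]
  exact setIntegral_mono_on (integrableOn_Ioo_of_le_mul_rpow ht hγ hf hf0 hle)
    (((intervalIntegral.integrableOn_Ioo_rpow_iff ht).2 hγ).const_mul M) measurableSet_Ioo hle

end DominatedByPower

lemma mul_half_le_setIntegral_Ioo {f : ℝ → ℝ} {t m : ℝ} (ht : 0 ≤ t)
    (hf : IntegrableOn f (Ioo 0 t)) (hf0 : ∀ s ∈ Ioo 0 t, 0 ≤ f s)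
    (hm : ∀ s ∈ Ioo (t / 2) t, m ≤ f s) :
    m * (t / 2) ≤ ∫ s in Ioo 0 t, f s := by
  have hsub : Ioo (t / 2) t ⊆ Ioo 0 t := Ioo_subset_Ioo_left (by linarith)
  calc m * (t / 2) = m * volume.real (Ioo (t / 2) t) := by
        rw [Real.volume_real_Ioo_of_le (by linarith)]; ring
    _ ≤ ∫ s in Ioo (t / 2) t, f s :=
      setIntegral_ge_of_const_le_real measurableSet_Ioo measure_Ioo_lt_top.ne hm (hf.mono_set hsub)
    _ ≤ ∫ s in Ioo 0 t, f s :=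
      setIntegral_mono_set hf ((ae_restrict_iff' measurableSet_Ioo).2 (.of_forall hf0))
        hsub.eventuallyLE

noncomputable def logWeight (a s : ℝ) : ℝ := log (exp 1 * a / s)

section LogWeight

variable {a s t : ℝ}

lemma one_le_logWeight (hs : 0 < s) (hsa : s ≤ a) : 1 ≤ logWeight a s := by
  refine (log_exp 1).symm.le.trans (log_le_log (exp_pos 1) ?_)
  rw [le_div_iff₀ hs]
  exact mul_le_mul_of_nonneg_left hsa (exp_pos 1).le

lemma logWeight_eq_add_log_div (ha : a ≠ 0) (hs : 0 < s) (ht : 0 < t) :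
    logWeight a s = logWeight a t + log (t / s) := by
  rw [logWeight, logWeight, ← log_mul (by positivity) (by positivity)]
  congr 1
  field_simp

lemma logWeight_rpow_neg_le (β : ℝ) {ε : ℝ} (hε : 0 < ε) (hs : 0 < s) (hst : s ≤ t)
    (hta : t ≤ a) :
    logWeight a s ^ (-β) ≤ (1 + |β| / ε) ^ |β| * (t / s) ^ ε * logWeight a t ^ (-β) := by
  have ht := hs.trans_le hst
  have hℓt := one_le_logWeight ht hta
  have hℓt0 : 0 < logWeight a t := by linarith
  have hu : 0 ≤ log (t / s) := log_nonneg ((one_le_div hs).2 hst)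
  have hsplit := logWeight_eq_add_log_div (ht.trans_le hta).ne' hs ht
  have hratio : logWeight a s / logWeight a t ≤ 1 + log (t / s) := by
    rw [hsplit, add_div, div_self hℓt0.ne']
    gcongr
    exact div_le_self hu hℓt
  calc logWeight a s ^ (-β)
      ≤ logWeight a t ^ (-β) * (logWeight a s / logWeight a t) ^ |β| := by
        simpa only [abs_neg] using
          rpow_le_rpow_mul_div_rpow_abs (-β) hℓt0 (by rw [hsplit]; linarith)
    _ ≤ logWeight a t ^ (-β) * (1 + log (t / s)) ^ |β| := by
        gcongr
        exact div_nonneg (by rw [hsplit]; linarith) hℓt0.le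
    _ ≤ logWeight a t ^ (-β) * ((1 + |β| / ε) ^ |β| * exp (ε * log (t / s))) := by
        gcongr
        exact one_add_rpow_le_mul_exp (abs_nonneg β) hε hu
    _ = (1 + |β| / ε) ^ |β| * (t / s) ^ ε * logWeight a t ^ (-β) := by
        rw [rpow_def_of_pos (div_pos ht hs), mul_comm (log _)]
        ring

lemma two_rpow_neg_abs_mul_le_logWeight_rpow (β : ℝ) (hs : 0 < s) (hst : s ≤ t)
    (hts : t ≤ 2 * s) (hta : t ≤ a) :
    2 ^ (-|β|) * logWeight a t ^ (-β) ≤ logWeight a s ^ (-β) := by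
  have ht := hs.trans_le hst
  have hℓt := one_le_logWeight ht hta
  have hℓt0 : 0 < logWeight a t := by linarith
  have hsplit := logWeight_eq_add_log_div (ht.trans_le hta).ne' hs ht
  have hlog : log (t / s) ≤ 1 :=
    calc log (t / s) ≤ log 2 := log_le_log (by positivity) ((div_le_iff₀ hs).2 (by linarith))
      _ ≤ 1 := by linarith [log_two_lt_d9]
  have hlower : logWeight a t ≤ logWeight a s := by
    rw [hsplit]; linarith [log_nonneg ((one_le_div hs).2 hst)]
  calc 2 ^ (-|β|) * logWeight a t ^ (-β)
      ≤ logWeight a t ^ (-β) * (logWeight a s / logWeight a t) ^ (-|β|) := by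
        rw [mul_comm]
        refine mul_le_mul_of_nonneg_left (rpow_le_rpow_of_nonpos ?_ ?_ ?_) (by positivity)
        · exact div_pos (by linarith) hℓt0
        · exact (div_le_iff₀ hℓt0).2 (by rw [hsplit]; linarith)
        · exact neg_nonpos.2 (abs_nonneg β)
    _ ≤ logWeight a s ^ (-β) := by
        simpa only [abs_neg] using rpow_mul_div_rpow_neg_abs_le (-β) (by positivity) hlower

end LogWeight

section Integrand

variable {a α β ε s t : ℝ}

lemma measurable_rpow_mul_logWeight :
    Measurable fun s ↦ s ^ (-α) * logWeight a s ^ (-β) := by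
  unfold logWeight
  fun_prop

lemma rpow_mul_logWeight_nonneg (hs : 0 < s) (hsa : s ≤ a) :
    0 ≤ s ^ (-α) * logWeight a s ^ (-β) :=
  mul_nonneg (rpow_nonneg hs.le _) (rpow_nonneg (zero_le_one.trans (one_le_logWeight hs hsa)) _)

lemma rpow_mul_logWeight_le_mul_rpow (hε : 0 < ε) (hs : 0 < s) (hst : s ≤ t) (hta : t ≤ a) :
    s ^ (-α) * logWeight a s ^ (-β) ≤
      (1 + |β| / ε) ^ |β| * t ^ ε * logWeight a t ^ (-β) * s ^ (-α - ε) :=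
  calc s ^ (-α) * logWeight a s ^ (-β)
      ≤ s ^ (-α) * ((1 + |β| / ε) ^ |β| * (t / s) ^ ε * logWeight a t ^ (-β)) := by
        gcongr
        exact logWeight_rpow_neg_le β hε hs hst hta
    _ = (1 + |β| / ε) ^ |β| * t ^ ε * logWeight a t ^ (-β) * s ^ (-α - ε) := by
        rw [div_rpow (hs.le.trans hst) hs.le, rpow_sub hs]
        ring

lemma integrableOn_rpow_mul_logWeight (hα : α < 1) (ht : 0 < t) (hta : t ≤ a) :
    IntegrableOn (fun s ↦ s ^ (-α) * logWeight a s ^ (-β)) (Ioo 0 t) := by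
  have hε : 0 < (1 - α) / 2 := by linarith
  exact integrableOn_Ioo_of_le_mul_rpow ht (by linarith)
    measurable_rpow_mul_logWeight.aestronglyMeasurable
    (fun s hs ↦ rpow_mul_logWeight_nonneg hs.1 (hs.2.le.trans hta))
    (fun s hs ↦ rpow_mul_logWeight_le_mul_rpow hε hs.1 hs.2.le hta)

lemma setIntegral_rpow_mul_logWeight_le (hε : 0 < ε) (hαε : α + ε < 1) (ht : 0 < t)
    (hta : t ≤ a) :
    ∫ s in Ioo 0 t, s ^ (-α) * logWeight a s ^ (-β) ≤
      (1 + |β| / ε) ^ |β| / (1 - α - ε) * (t ^ (1 - α) * logWeight a t ^ (-β)) := by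
  have hexp : t ^ (1 - α) = t ^ ε * t ^ (-α - ε + 1) := by
    rw [← rpow_add ht]; ring_nf
  calc ∫ s in Ioo 0 t, s ^ (-α) * logWeight a s ^ (-β)
      ≤ (1 + |β| / ε) ^ |β| * t ^ ε * logWeight a t ^ (-β) *
          (t ^ (-α - ε + 1) / (-α - ε + 1)) :=
        setIntegral_Ioo_le_of_le_mul_rpow ht (by linarith)
          measurable_rpow_mul_logWeight.aestronglyMeasurable
          (fun s hs ↦ rpow_mul_logWeight_nonneg hs.1 (hs.2.le.trans hta))
          (fun s hs ↦ rpow_mul_logWeight_le_mul_rpow hε hs.1 hs.2.le hta)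
    _ = (1 + |β| / ε) ^ |β| / (1 - α - ε) * (t ^ (1 - α) * logWeight a t ^ (-β)) := by
        rw [hexp, show -α - ε + 1 = 1 - α - ε by ring]
        ring

lemma le_setIntegral_rpow_mul_logWeight (hα0 : 0 ≤ α) (hα1 : α < 1) (ht : 0 < t)
    (hta : t ≤ a) :
    2 ^ (-|β|) / 2 * (t ^ (1 - α) * logWeight a t ^ (-β)) ≤
      ∫ s in Ioo 0 t, s ^ (-α) * logWeight a s ^ (-β) := by
  have hℓt : 0 ≤ logWeight a t ^ (-β) :=
    rpow_nonneg (zero_le_one.trans (one_le_logWeight ht hta)) _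
  calc 2 ^ (-|β|) / 2 * (t ^ (1 - α) * logWeight a t ^ (-β))
      = t ^ (-α) * (2 ^ (-|β|) * logWeight a t ^ (-β)) * (t / 2) := by
        rw [sub_eq_neg_add, rpow_add ht, rpow_one]
        ring
    _ ≤ ∫ s in Ioo 0 t, s ^ (-α) * logWeight a s ^ (-β) := by
        refine mul_half_le_setIntegral_Ioo ht.le (integrableOn_rpow_mul_logWeight hα1 ht hta)
          (fun s hs ↦ rpow_mul_logWeight_nonneg hs.1 (hs.2.le.trans hta)) fun s hs ↦ ?_
        have hs0 : 0 < s := by linarith [hs.1]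
        exact mul_le_mul (rpow_le_rpow_of_nonpos hs0 hs.2.le (neg_nonpos.2 hα0))
          (two_rpow_neg_abs_mul_le_logWeight_rpow β hs0 hs.2.le (by linarith [hs.1]) hta)
          (by positivity) (rpow_nonneg hs0.le _)

end Integrand

theorem stmt_8_general (a α β : ℝ) (hα0 : 0 < α) (hα1 : α < 1) :
    ∃ c C : ℝ, 0 < c ∧ 0 < C ∧ ∀ t ∈ Ioc (0 : ℝ) a,
      c * (t ^ (1 - α) * Real.log (Real.exp 1 * a / t) ^ (-β)) ≤
        (∫ s in Ioo (0 : ℝ) t, s ^ (-α) * Real.log (Real.exp 1 * a / s) ^ (-β)) ∧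
      (∫ s in Ioo (0 : ℝ) t, s ^ (-α) * Real.log (Real.exp 1 * a / s) ^ (-β)) ≤
        C * (t ^ (1 - α) * Real.log (Real.exp 1 * a / t) ^ (-β)) := by
  have hε : 0 < (1 - α) / 2 := by linarith
  refine ⟨2 ^ (-|β|) / 2, (1 + |β| / ((1 - α) / 2)) ^ |β| / (1 - α - (1 - α) / 2),
    by positivity, div_pos (by positivity) (by linarith), fun t ⟨ht, hta⟩ ↦ ⟨?_, ?_⟩⟩
  · exact le_setIntegral_rpow_mul_logWeight hα0.le hα1 ht hta
  · exact setIntegral_rpow_mul_logWeight_le hε (by linarith) ht hta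

/-- For `a > 0`, `α ∈ (0,1)`, `β ∈ ℝ`, with `ℓ_a(s) = log(e a / s)`,
one has `∫_0^t s^{−α} ℓ_a(s)^{−β} ds ≈ t^{1−α} ℓ_a(t)^{−β}` on `(0,a]`,
with constants independent of `t`. -/
theorem stmt_8 (a α β : ℝ) (ha : 0 < a) (hα0 : 0 < α) (hα1 : α < 1) :
    ∃ c C : ℝ, 0 < c ∧ 0 < C ∧ ∀ t ∈ Ioc (0 : ℝ) a,
      c * (t ^ (1 - α) * Real.log (Real.exp 1 * a / t) ^ (-β)) ≤
        (∫ s in Ioo (0 : ℝ) t, s ^ (-α) * Real.log (Real.exp 1 * a / s) ^ (-β)) ∧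
      (∫ s in Ioo (0 : ℝ) t, s ^ (-α) * Real.log (Real.exp 1 * a / s) ^ (-β)) ≤
        C * (t ^ (1 - α) * Real.log (Real.exp 1 * a / t) ^ (-β)) :=
  stmt_8_general a α β hα0 hα1
end

section
/- Let a > 0, α ∈ (0,1) and β ∈ ℝ. Then there exists a constant C > 0 such that for every t ∈ (0,a]: ∫_0^t s^{α−1} ℓ_a(s)^{β} ds ≤ C · t^{α} ℓ_a(t)^{β}. -/
open MeasureTheory Set Real

/-!
Write `L = ℓ_a(t)`. For `0 < s < t` one has `ℓ_a(s) = L + log (t / s)`, and since `L ≥ 1` while the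
logarithm grows more slowly than any power, `ℓ_a(s) ^ β ≤ K L ^ β (t / s) ^ (α / 2)`. The integrand is
therefore at most `K L ^ β t ^ (α / 2) s ^ (α / 2 - 1)`, whose integral over `(0, t)` is
`(2 K / α) t ^ α L ^ β`.
-/

lemma add_log_le_mul_rpow {L x ε : ℝ} (hL : 1 ≤ L) (hx : 1 ≤ x) (hε : 0 < ε) :
    L + log x ≤ L * ((1 + 1 / ε) * x ^ ε) := by
  have hlog : log x ≤ x ^ ε / ε := log_le_rpow_div (by linarith) hε
  have hxε : 1 ≤ x ^ ε := one_le_rpow hx hε.le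
  have hlog_nonneg : 0 ≤ log x := log_nonneg hx
  calc L + log x ≤ L * (1 + log x) := by nlinarith
    _ ≤ L * (x ^ ε + x ^ ε / ε) := by gcongr
    _ = L * ((1 + 1 / ε) * x ^ ε) := by ring

lemma exists_rpow_add_log_le (β : ℝ) {c : ℝ} (hc : 0 < c) :
    ∃ K > 0, ∀ L x : ℝ, 1 ≤ L → 1 ≤ x → (L + log x) ^ β ≤ K * L ^ β * x ^ c := by
  rcases le_or_gt β 0 with hβ | hβ
  · refine ⟨1, one_pos, fun L x hL hx => ?_⟩
    calc (L + log x) ^ β ≤ L ^ β :=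
          rpow_le_rpow_of_nonpos (by linarith) (by linarith [log_nonneg hx]) hβ
      _ ≤ 1 * L ^ β * x ^ c := by
          rw [one_mul]
          exact le_mul_of_one_le_right (by positivity) (one_le_rpow hx hc.le)
  · refine ⟨(1 + β / c) ^ β, by positivity, fun L x hL hx => ?_⟩
    have hε : 0 < c / β := div_pos hc hβ
    calc (L + log x) ^ β ≤ (L * ((1 + 1 / (c / β)) * x ^ (c / β))) ^ β :=
          rpow_le_rpow (by linarith [log_nonneg hx]) (add_log_le_mul_rpow hL hx hε) hβ.le
      _ = (1 + β / c) ^ β * L ^ β * x ^ c := by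
          have hx0 : 0 ≤ x := by linarith
          rw [mul_rpow (by linarith) (by positivity), mul_rpow (by positivity) (by positivity),
            ← rpow_mul hx0, div_mul_cancel₀ c hβ.ne', one_div_div]
          ring

lemma one_le_log_exp_one_mul_div {a t : ℝ} (ht : 0 < t) (hta : t ≤ a) :
    1 ≤ log (exp 1 * a / t) := by
  rw [le_log_iff_exp_le (by have := ht.trans_le hta; positivity), le_div_iff₀ ht]
  exact mul_le_mul_of_nonneg_left hta (exp_pos 1).le

lemma log_exp_one_mul_div_eq_add {a s t : ℝ} (ha : a ≠ 0) (hs : s ≠ 0) (ht : t ≠ 0) :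
    log (exp 1 * a / s) = log (exp 1 * a / t) + log (t / s) := by
  rw [← log_mul (by simp [ha, ht, (exp_pos 1).ne']) (div_ne_zero ht hs)]
  congr 1
  field_simp

lemma integral_Ioo_rpow_sub_one {c t : ℝ} (hc : 0 < c) (ht : 0 ≤ t) :
    ∫ s in Ioo 0 t, s ^ (c - 1) = t ^ c / c := by
  rw [← integral_Ioc_eq_integral_Ioo, ← intervalIntegral.integral_of_le ht,
    integral_rpow (Or.inl (by linarith)), sub_add_cancel, zero_rpow hc.ne', sub_zero]

theorem stmt_9_general (a α β : ℝ) (ha : 0 < a) (hα0 : 0 < α) :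
    ∃ C : ℝ, 0 < C ∧ ∀ t ∈ Ioc (0 : ℝ) a,
      (∫ s in Ioo (0 : ℝ) t, s ^ (α - 1) * Real.log (Real.exp 1 * a / s) ^ β) ≤
        C * (t ^ α * Real.log (Real.exp 1 * a / t) ^ β) := by
  obtain ⟨K, hK, hlog⟩ := exists_rpow_add_log_le β (half_pos hα0)
  refine ⟨2 * K / α, by positivity, fun t ⟨ht, hta⟩ => ?_⟩
  set L := log (exp 1 * a / t)
  have hL : 1 ≤ L := one_le_log_exp_one_mul_div ht hta
  have hbound : ∀ s ∈ Ioo 0 t, s ^ (α - 1) * log (exp 1 * a / s) ^ β ≤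
      K * L ^ β * t ^ (α / 2) * s ^ (α / 2 - 1) := by
    rintro s ⟨hs, hst⟩
    have hsplit : s ^ (α - 1) = s ^ (α / 2 - 1) * s ^ (α / 2) := by
      rw [← rpow_add hs]; ring_nf
    calc s ^ (α - 1) * log (exp 1 * a / s) ^ β
        = s ^ (α - 1) * (L + log (t / s)) ^ β := by
          rw [log_exp_one_mul_div_eq_add ha.ne' hs.ne' ht.ne']
      _ ≤ s ^ (α - 1) * (K * L ^ β * (t / s) ^ (α / 2)) := by
          gcongr
          exact hlog L (t / s) hL ((one_le_div hs).mpr hst.le)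
      _ = K * L ^ β * t ^ (α / 2) * s ^ (α / 2 - 1) := by
          rw [hsplit, div_rpow ht.le hs.le]
          field_simp
  have hint : IntegrableOn (fun s => s ^ (α / 2 - 1)) (Ioo 0 t) :=
    (intervalIntegral.integrableOn_Ioo_rpow_iff ht).mpr (by linarith)
  calc (∫ s in Ioo 0 t, s ^ (α - 1) * log (exp 1 * a / s) ^ β)
      ≤ ∫ s in Ioo 0 t, K * L ^ β * t ^ (α / 2) * s ^ (α / 2 - 1) := by
        refine integral_mono_of_nonneg ?_ (hint.const_mul _) ?_
        · filter_upwards [self_mem_ae_restrict measurableSet_Ioo] with s ⟨hs, hst⟩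
          have := one_le_log_exp_one_mul_div hs (hst.le.trans hta)
          positivity
        · exact (ae_restrict_mem measurableSet_Ioo).mono hbound
    _ = K * L ^ β * t ^ (α / 2) * (t ^ (α / 2) / (α / 2)) := by
        rw [integral_const_mul, integral_Ioo_rpow_sub_one (half_pos hα0) ht.le]
    _ = 2 * K / α * (t ^ α * L ^ β) := by
        rw [← add_halves α, rpow_add ht, add_halves]
        field_simp

/-- For `a > 0`, `α ∈ (0,1)`, `β ∈ ℝ`, with `ℓ_a(s) = log(e a / s)`,
one has `∫_0^t s^{α−1} ℓ_a(s)^{β} ds ≤ C t^{α} ℓ_a(t)^{β}` on `(0,a]`,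
with `C` independent of `t`. -/
theorem stmt_9 (a α β : ℝ) (ha : 0 < a) (hα0 : 0 < α) (hα1 : α < 1) :
    ∃ C : ℝ, 0 < C ∧ ∀ t ∈ Ioc (0 : ℝ) a,
      (∫ s in Ioo (0 : ℝ) t, s ^ (α - 1) * Real.log (Real.exp 1 * a / s) ^ β) ≤
        C * (t ^ α * Real.log (Real.exp 1 * a / t) ^ β) :=
  stmt_9_general a α β ha hα0
end

section
/- Let a > 0 and β < 0. Then there exists a constant C > 0 such that for every t ∈ (0,a]: ℓ_a(t)^{β−1} · ∫_0^t ℓ_a(s)^{1−β} · (1 + log(log(e·a/s))) ds ≤ C · ∫_0^t (1 + log(log(e·a/s))) ds. -/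
/-!
Write `L s = log (c / s)` with `c = e a`, so `L ≥ L t ≥ 1` on `(0, t]`, and `b = 1 + log ∘ L`.
Since `(1 + log x) / x` decreases on `[1, ∞)`, `b s ≤ (b t / L t) L s`, which reduces the left-hand
integrand to `L ^ m` with `m = 2 - β`. The function `s (L s + m) ^ m` vanishes at `0` and has
derivative `(L + m) ^ (m - 1) L ≥ L ^ m`, so `∫₀ᵗ L ^ m ≤ t (L t + m) ^ m ≤ (1 + m) ^ m t L t ^ m`.
On the other side `b ≥ b t` on `(0, t)`, so `∫₀ᵗ b ≥ t b t`, and the powers of `L t` cancel.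
-/

open MeasureTheory Set Real Filter Topology

lemma one_add_log_le_self {x : ℝ} (hx : 0 < x) : 1 + log x ≤ x := by
  linarith [log_le_sub_one_of_pos hx]

lemma one_add_log_mul_le_of_le {x y : ℝ} (hy : 1 ≤ y) (hyx : y ≤ x) :
    (1 + log x) * y ≤ (1 + log y) * x := by
  have hy0 : 0 < y := by linarith
  have hlog : log x - log y ≤ x / y - 1 := by
    rw [← log_div (by linarith) hy0.ne']
    exact log_le_sub_one_of_pos (div_pos (by linarith) hy0)
  have : (log x - log y) * y ≤ x - y := by
    calc (log x - log y) * y ≤ (x / y - 1) * y := by gcongr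
      _ = x - y := by field_simp
  nlinarith [log_nonneg hy]

lemma rpow_le_rpow_add_sub_one_mul {x m : ℝ} (hx : 0 < x) (hm : 1 ≤ m) :
    x ^ m ≤ (x + m) ^ (m - 1) * x := by
  calc x ^ m = x ^ (m - 1) * x := by rw [← rpow_add_one hx.ne', sub_add_cancel]
    _ ≤ (x + m) ^ (m - 1) * x := by gcongr; linarith

lemma log_div_le_log_div {c s t : ℝ} (hc : 0 < c) (hs : 0 < s) (hst : s ≤ t) :
    log (c / t) ≤ log (c / s) :=
  log_le_log (div_pos hc (hs.trans_le hst)) (div_le_div_of_nonneg_left hc.le hs hst)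

lemma le_of_one_le_log_div {c t : ℝ} (hc : 0 < c) (ht : 0 < t) (hLt : 1 ≤ log (c / t)) :
    t ≤ c := by
  have h := (le_log_iff_exp_le (div_pos hc ht)).1 hLt
  exact (one_le_div ht).1 ((one_le_exp zero_le_one).trans h)

lemma tendsto_mul_rpow_log_div_add_nhdsGT_zero {c : ℝ} (hc : c ≠ 0) (k : ℝ) {m : ℝ}
    (hm : 0 < m) : Tendsto (fun s => s * (log (c / s) + k) ^ m) (𝓝[>] 0) (𝓝 0) := by
  have hroot : Tendsto (fun s : ℝ => s ^ m⁻¹) (𝓝[>] 0) (𝓝 0) := by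
    simpa [zero_rpow (inv_pos.2 hm).ne'] using
      ((continuousAt_rpow_const 0 m⁻¹ (Or.inr (inv_pos.2 hm).le)).tendsto).mono_left
        nhdsWithin_le_nhds
  have hbase : Tendsto (fun s => (log c + k) * s ^ m⁻¹ - log s * s ^ m⁻¹) (𝓝[>] 0) (𝓝 0) := by
    simpa using (hroot.const_mul (log c + k)).sub (tendsto_log_mul_rpow_nhdsGT_zero (inv_pos.2 hm))
  have hlarge : ∀ᶠ s in 𝓝[>] (0 : ℝ), 0 ≤ log c + k - log s :=
    (tendsto_log_nhdsGT_zero.eventually_le_atBot (log c + k)).mono fun s hs => by linarith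
  have := hbase.rpow_const (Or.inr hm.le)
  rw [zero_rpow hm.ne'] at this
  refine this.congr' ?_
  filter_upwards [self_mem_nhdsWithin, hlarge] with s hs hpos
  have hs : 0 < s := hs
  rw [← sub_mul, mul_rpow hpos (rpow_nonneg hs.le _), ← rpow_mul hs.le, inv_mul_cancel₀ hm.ne',
    rpow_one, log_div hc hs.ne', mul_comm]
  ring_nf

lemma hasDerivAt_mul_rpow_log_div_add {c m s : ℝ} (hc : c ≠ 0) (hs : 0 < s)
    (hpos : 0 < log (c / s) + m) :
    HasDerivAt (fun x => x * (log (c / x) + m) ^ m)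
      ((log (c / s) + m) ^ (m - 1) * log (c / s)) s := by
  have hlog : HasDerivAt (fun x => log (c / x) + m) (-s⁻¹) s := by
    have := ((hasDerivAt_log hs.ne').const_sub (log c)).add_const m
    refine (this.congr_of_eventuallyEq ?_).congr_deriv (by ring)
    filter_upwards [eventually_gt_nhds hs] with x hx
    rw [log_div hc hx.ne']
  refine ((hasDerivAt_id s).mul (hlog.rpow_const (Or.inl hpos.ne'))).congr_deriv ?_
  have hsplit : (log (c / s) + m) ^ m = (log (c / s) + m) ^ (m - 1) * (log (c / s) + m) := by
    rw [← rpow_add_one hpos.ne', sub_add_cancel]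
  rw [id, hsplit]
  field_simp
  ring

lemma continuousOn_mul_rpow_log_div_add {c m t : ℝ} (hc : 0 < c) (hm : 0 < m) (htc : t ≤ c) :
    ContinuousOn (fun x => x * (log (c / x) + m) ^ m) (Icc 0 t) := by
  intro x hx
  rcases hx.1.eq_or_lt with rfl | hx0
  · have : ContinuousWithinAt (fun x => x * (log (c / x) + m) ^ m) (Ioi 0) 0 := by
      simpa [ContinuousWithinAt] using tendsto_mul_rpow_log_div_add_nhdsGT_zero hc.ne' m hm
    exact (continuousWithinAt_Ioi_iff_Ici.1 this).mono Icc_subset_Ici_self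
  · have hL : 0 ≤ log (c / x) := log_nonneg ((one_le_div hx0).2 (hx.2.trans htc))
    exact (hasDerivAt_mul_rpow_log_div_add hc.ne' hx0 (by linarith)).continuousAt.continuousWithinAt

lemma intervalIntegrable_and_integral_rpow_log_div_add_mul_log_div {c m t : ℝ} (hc : 0 < c)
    (hm : 0 < m) (ht : 0 ≤ t) (htc : t ≤ c) :
    IntervalIntegrable (fun s => (log (c / s) + m) ^ (m - 1) * log (c / s)) volume 0 t ∧
      ∫ s in 0..t, (log (c / s) + m) ^ (m - 1) * log (c / s) = t * (log (c / t) + m) ^ m := by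
  have hL : ∀ s ∈ Ioo 0 t, 0 ≤ log (c / s) := fun s hs =>
    log_nonneg ((one_le_div hs.1).2 (hs.2.le.trans htc))
  have hderiv : ∀ s ∈ Ioo 0 t, HasDerivAt (fun x => x * (log (c / x) + m) ^ m)
      ((log (c / s) + m) ^ (m - 1) * log (c / s)) s := fun s hs =>
    hasDerivAt_mul_rpow_log_div_add hc.ne' hs.1 (by linarith [hL s hs])
  have hcont := continuousOn_mul_rpow_log_div_add hc hm htc
  have hint : IntervalIntegrable (fun s => (log (c / s) + m) ^ (m - 1) * log (c / s)) volume 0 t :=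
    intervalIntegral.intervalIntegrable_deriv_of_nonneg (by rwa [uIcc_of_le ht])
      (by simpa [ht] using hderiv)
      (by simpa [ht] using fun s hs => mul_nonneg (rpow_nonneg (by linarith [hL s hs]) _) (hL s hs))
  refine ⟨hint, ?_⟩
  rw [intervalIntegral.integral_eq_sub_of_hasDerivAt_of_le ht hcont hderiv hint]
  simp

lemma integrableOn_rpow_log_div_and_setIntegral_le {c m t : ℝ} (hc : 0 < c) (hm : 1 ≤ m)
    (ht : 0 ≤ t) (htc : t ≤ c) :
    IntegrableOn (fun s => log (c / s) ^ m) (Ioo 0 t) ∧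
      ∫ s in Ioo 0 t, log (c / s) ^ m ≤ t * (log (c / t) + m) ^ m := by
  obtain ⟨hderivInt, hFTC⟩ :=
    intervalIntegrable_and_integral_rpow_log_div_add_mul_log_div hc (zero_lt_one.trans_le hm) ht htc
  have hderivInt : IntegrableOn (fun s => (log (c / s) + m) ^ (m - 1) * log (c / s)) (Ioo 0 t) :=
    ((intervalIntegrable_iff_integrableOn_Ioc_of_le ht).1 hderivInt).mono_set Ioo_subset_Ioc_self
  have hL : ∀ s ∈ Ioo 0 t, 0 < log (c / s) := fun s hs =>
    log_pos ((one_lt_div hs.1).2 (hs.2.trans_le htc))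
  have hle : ∀ s ∈ Ioo 0 t, log (c / s) ^ m ≤ (log (c / s) + m) ^ (m - 1) * log (c / s) :=
    fun s hs => rpow_le_rpow_add_sub_one_mul (hL s hs) hm
  have hint : IntegrableOn (fun s => log (c / s) ^ m) (Ioo 0 t) := by
    refine Integrable.mono' hderivInt (by fun_prop : Measurable _).aestronglyMeasurable
      (ae_restrict_of_forall_mem measurableSet_Ioo fun s hs => ?_)
    rw [norm_of_nonneg (rpow_nonneg (hL s hs).le _)]
    exact hle s hs
  refine ⟨hint, ?_⟩
  calc ∫ s in Ioo 0 t, log (c / s) ^ m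
      ≤ ∫ s in Ioo 0 t, (log (c / s) + m) ^ (m - 1) * log (c / s) :=
        setIntegral_mono_on hint hderivInt measurableSet_Ioo hle
    _ = t * (log (c / t) + m) ^ m := by
        rw [← integral_Ioc_eq_integral_Ioo, ← intervalIntegral.integral_of_le ht, hFTC]

lemma integrableOn_one_add_log_log_div {c t : ℝ} (hc : 0 < c) (ht : 0 < t)
    (hLt : 1 ≤ log (c / t)) :
    IntegrableOn (fun s => 1 + log (log (c / s))) (Ioo 0 t) := by
  have hL : IntegrableOn (fun s => log (c / s)) (Ioo 0 t) := by
    simpa only [rpow_one] using (integrableOn_rpow_log_div_and_setIntegral_le hc le_rfl ht.le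
      (le_of_one_le_log_div hc ht hLt)).1
  refine Integrable.mono' hL (by fun_prop : Measurable _).aestronglyMeasurable
    (ae_restrict_of_forall_mem measurableSet_Ioo fun s hs => ?_)
  have hLs : 1 ≤ log (c / s) := hLt.trans (log_div_le_log_div hc hs.1 hs.2.le)
  rw [norm_of_nonneg (by linarith [log_nonneg hLs])]
  exact one_add_log_le_self (by linarith)

lemma mul_one_add_log_log_div_le_setIntegral {c t : ℝ} (hc : 0 < c) (ht : 0 < t)
    (hLt : 1 ≤ log (c / t)) :
    t * (1 + log (log (c / t))) ≤ ∫ s in Ioo 0 t, (1 + log (log (c / s))) := by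
  have hmono : ∀ s ∈ Ioo 0 t, 1 + log (log (c / t)) ≤ 1 + log (log (c / s)) := fun s hs =>
    add_le_add_right (log_le_log (by linarith) (log_div_le_log_div hc hs.1 hs.2.le)) 1
  have := setIntegral_ge_of_const_le_real measurableSet_Ioo measure_Ioo_lt_top.ne hmono
    (integrableOn_one_add_log_log_div hc ht hLt)
  rwa [volume_real_Ioo_of_le ht.le, sub_zero, mul_comm] at this

lemma setIntegral_rpow_log_div_mul_one_add_log_log_div_le {c t p : ℝ} (hc : 0 < c) (ht : 0 < t)
    (hLt : 1 ≤ log (c / t)) (hp : 0 ≤ p) :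
    ∫ s in Ioo 0 t, log (c / s) ^ p * (1 + log (log (c / s))) ≤
      (2 + p) ^ (1 + p) * log (c / t) ^ p * (t * (1 + log (log (c / t)))) := by
  set L := log (c / t)
  set bt := 1 + log L
  have hL0 : 0 < L := by linarith
  have hbt : 0 ≤ bt := by linarith [log_nonneg hLt]
  obtain ⟨hint, hbound⟩ := integrableOn_rpow_log_div_and_setIntegral_le hc (m := 1 + p)
    (by linarith) ht.le (le_of_one_le_log_div hc ht hLt)
  have hLs : ∀ s ∈ Ioo 0 t, 1 ≤ log (c / s) := fun s hs =>
    hLt.trans (log_div_le_log_div hc hs.1 hs.2.le)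
  have hcompare : ∀ s ∈ Ioo 0 t,
      log (c / s) ^ p * (1 + log (log (c / s))) ≤ bt / L * log (c / s) ^ (1 + p) := by
    intro s hs
    have hLs0 : 0 < log (c / s) := by linarith [hLs s hs]
    have hb : 1 + log (log (c / s)) ≤ bt / L * log (c / s) := by
      rw [div_mul_eq_mul_div, le_div_iff₀ hL0]
      exact one_add_log_mul_le_of_le hLt (log_div_le_log_div hc hs.1 hs.2.le)
    calc log (c / s) ^ p * (1 + log (log (c / s))) ≤ log (c / s) ^ p * (bt / L * log (c / s)) := by
          gcongr
      _ = bt / L * log (c / s) ^ (1 + p) := by rw [add_comm 1 p, rpow_add_one hLs0.ne']; ring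
  have hfint : IntegrableOn (fun s => log (c / s) ^ p * (1 + log (log (c / s)))) (Ioo 0 t) := by
    refine Integrable.mono' (hint.const_mul (bt / L))
      (by fun_prop : Measurable _).aestronglyMeasurable
      (ae_restrict_of_forall_mem measurableSet_Ioo fun s hs => ?_)
    rw [norm_of_nonneg (mul_nonneg (rpow_nonneg (by linarith [hLs s hs]) _)
      (by linarith [log_nonneg (hLs s hs)]))]
    exact hcompare s hs
  calc ∫ s in Ioo 0 t, log (c / s) ^ p * (1 + log (log (c / s)))
      ≤ ∫ s in Ioo 0 t, bt / L * log (c / s) ^ (1 + p) :=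
        setIntegral_mono_on hfint (hint.const_mul _) measurableSet_Ioo hcompare
    _ = bt / L * ∫ s in Ioo 0 t, log (c / s) ^ (1 + p) := integral_const_mul _ _
    _ ≤ bt / L * (t * (L + (1 + p)) ^ (1 + p)) := by gcongr
    _ ≤ bt / L * (t * ((2 + p) * L) ^ (1 + p)) := by gcongr; nlinarith
    _ = (2 + p) ^ (1 + p) * L ^ p * (t * bt) := by
        rw [mul_rpow (by linarith) hL0.le, add_comm 1 p, rpow_add_one hL0.ne']
        field_simp

/-- For `a > 0` and `β < 0`, with `ℓ_a(s) = log(e a / s)`, there is `C > 0`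
such that for all `t ∈ (0,a]`:
`ℓ_a(t)^{β−1} ∫_0^t ℓ_a(s)^{1−β} (1 + log(log(e a / s))) ds ≤ C ∫_0^t (1 + log(log(e a / s))) ds`. -/
theorem stmt_17 (a β : ℝ) (ha : 0 < a) (hβ : β < 0) :
    ∃ C : ℝ, 0 < C ∧ ∀ t ∈ Ioc (0 : ℝ) a,
      Real.log (Real.exp 1 * a / t) ^ (β - 1) *
          (∫ s in Ioo (0 : ℝ) t, Real.log (Real.exp 1 * a / s) ^ (1 - β) *
            (1 + Real.log (Real.log (Real.exp 1 * a / s)))) ≤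
        C * ∫ s in Ioo (0 : ℝ) t, (1 + Real.log (Real.log (Real.exp 1 * a / s))) := by
  have hC : 0 < (2 + (1 - β)) ^ (1 + (1 - β)) := rpow_pos_of_pos (by linarith) _
  refine ⟨_, hC, fun t ht => ?_⟩
  have hc : 0 < exp 1 * a := by positivity
  have hLt : 1 ≤ log (exp 1 * a / t) := by
    rw [mul_div_assoc, log_mul (exp_pos 1).ne' (div_pos ha ht.1).ne', log_exp]
    linarith [log_nonneg ((one_le_div ht.1).2 ht.2)]
  have hcancel : log (exp 1 * a / t) ^ (β - 1) * log (exp 1 * a / t) ^ (1 - β) = 1 := by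
    rw [← rpow_add (by linarith)]
    simp
  calc log (exp 1 * a / t) ^ (β - 1) *
        ∫ s in Ioo 0 t, log (exp 1 * a / s) ^ (1 - β) * (1 + log (log (exp 1 * a / s)))
      ≤ log (exp 1 * a / t) ^ (β - 1) * ((2 + (1 - β)) ^ (1 + (1 - β)) *
          log (exp 1 * a / t) ^ (1 - β) * (t * (1 + log (log (exp 1 * a / t))))) := by
        gcongr
        exact setIntegral_rpow_log_div_mul_one_add_log_log_div_le hc ht.1 hLt (by linarith)
    _ = (2 + (1 - β)) ^ (1 + (1 - β)) * (t * (1 + log (log (exp 1 * a / t)))) := by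
        linear_combination (2 + (1 - β)) ^ (1 + (1 - β)) * (t * (1 + log (log (exp 1 * a / t)))) *
          hcancel
    _ ≤ (2 + (1 - β)) ^ (1 + (1 - β)) * ∫ s in Ioo 0 t, (1 + log (log (exp 1 * a / s))) :=
        mul_le_mul_of_nonneg_left (mul_one_add_log_log_div_le_setIntegral hc ht.1 hLt) hC.le
end
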